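/- Let $\mathcal{O}$ be a Dedekind domain with field of fractions $K \neq \mathcal{O}$ and let $\Lambda \subseteq \Gamma$ be $\mathcal{O}$-orders in a finite-dimensional $K$-algebra. (i) If $X$ is a left $\Lambda$-lattice then there is an equality of right $\Gamma$-lattices $(\Gamma X)^{\vee} = (X^{\vee})^{\Gamma}$ and an equality of indices $[\Gamma X : X]_{\mathcal{O}} = [X^{\vee} : (X^{\vee})^{\Gamma}]_{\mathcal{O}}$. (ii) If $X$ is a right $\Lambda$-lattice then there is an equality of left $\Gamma$-lattices $(X\Gamma)^{\vee} = {}^{\Gamma}(X^{\vee})$ and an equality of indices $[X\Gamma : X]_{\mathcal{O}} = [X^{\vee} : {}^{\Gamma}(X^{\vee})]_{\mathcal{O}}$. -/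

import Mathlib

open scoped TensorProduct

universe u v w

/-- `K` is a global field: a number field or a finite extension of `𝔽_p(t)`. -/
def IsGlobalField (K : Type v) [Field K] : Prop :=
  NumberField K ∨
    ∃ (p : ℕ) (_ : Fact p.Prime) (_ : Algebra (RatFunc (ZMod p)) K),
      FiniteDimensional (RatFunc (ZMod p)) K

/-- A finite-dimensional `K`-algebra is separable iff it is semisimple after base change
to an algebraic closure of `K`. -/
def IsSeparableAlgebra (K : Type v) (A : Type w) [Field K] [Ring A] [Algebra K A] : Prop :=
  IsSemisimpleRing (AlgebraicClosure K ⊗[K] A)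

/-- The localisation at a prime `P` of an `O`-submodule of `V`, viewed as a subset of `V`. -/
def locAt (O : Type u) [CommRing O] {V : Type w} [AddCommGroup V] [Module O V]
    (P : Ideal O) (M : Submodule O V) : Set V :=
  {x : V | ∃ s : O, s ∉ P ∧ s • x ∈ M}

/-- `J ⊆ K` is the generalised module index `[M : N]_O` of two full `O`-lattices `M, N` in the
`K`-vector space `V`: at every maximal ideal `P` of `O` there is a `K`-linear automorphism `e`
of `V` carrying the localisation of `M` at `P` onto that of `N`, and the localisation of `J`
at `P` is the `O_P`-module generated by `det e`. -/
def IsIdx (O : Type u) [CommRing O] (K : Type v) [Field K] [Algebra O K]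
    {V : Type w} [AddCommGroup V] [Module K V] [Module O V] [IsScalarTower O K V]
    (M N : Submodule O V) (J : Submodule O K) : Prop :=
  ∀ P : Ideal O, P.IsMaximal →
    ∃ e : V ≃ₗ[K] V,
      (⇑e '' locAt O P M) = locAt O P N ∧
      locAt O P J = locAt O P (Submodule.span O {LinearMap.det (e : V →ₗ[K] V)})

/-- The image of an ideal of `O` in `K`, as an `O`-submodule of `K`. -/
def idealK (O : Type u) [CommRing O] (K : Type v) [Field K] [Algebra O K]
    (I : Ideal O) : Submodule O K :=
  Submodule.map (Algebra.linearMap O K) I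

/-- `Λ` is an `O`-order in the finite-dimensional `K`-algebra `A`: a subring of `A` which is a
full `O`-lattice in `A`. -/
def IsOrder (O : Type u) [CommRing O] (K : Type v) [Field K] [Algebra O K]
    (A : Type w) [Ring A] [Algebra K A] [Algebra O A] [IsScalarTower O K A]
    (Λ : Subalgebra O A) : Prop :=
  (Subalgebra.toSubmodule Λ).FG ∧ Submodule.span K (Λ : Set A) = ⊤

/-- `M` is a maximal `O`-order in `A`. -/
def IsMaximalOrder (O : Type u) [CommRing O] (K : Type v) [Field K] [Algebra O K]
    (A : Type w) [Ring A] [Algebra K A] [Algebra O A] [IsScalarTower O K A]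
    (M : Subalgebra O A) : Prop :=
  IsOrder O K A M ∧ ∀ Γ : Subalgebra O A, IsOrder O K A Γ → M ≤ Γ → Γ = M

/-- The subset `X` of the `A`-module `V` is stable under the subset `Λ` of `A`. -/
def IsStable {A : Type w} [Ring A] {V : Type w} [AddCommGroup V] [Module A V]
    (Λ : Set A) (X : Set V) : Prop :=
  ∀ a ∈ Λ, ∀ x ∈ X, a • x ∈ X

/-- The set of `Λ`-linear combinations of `v 0, …, v (n-1)`, for a subset `Λ` of `A`. -/
def freeImage {A : Type w} [Ring A] {V : Type w} [AddCommGroup V] [Module A V]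
    (Λ : Set A) {n : ℕ} (v : Fin n → V) : Set V :=
  (fun f : Fin n → A => ∑ i, f i • v i) '' {f | ∀ i, f i ∈ Λ}

/-- `Z` is a free lattice of rank `n` with respect to the subset `Λ` of `A`: it has an
`n`-element basis over `Λ` whose `A`-linear combinations are unique. -/
def IsFreeLattice (O : Type u) [CommRing O] {A : Type w} [Ring A]
    {V : Type w} [AddCommGroup V] [Module A V] [Module O V]
    (Λ : Set A) (n : ℕ) (Z : Submodule O V) : Prop :=
  ∃ v : Fin n → V,
    Function.Injective (fun f : Fin n → A => ∑ i, f i • v i) ∧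
    (Z : Set V) = freeImage Λ v

/-- `X` is locally free of rank `n` over the order `Λ`: at every maximal ideal `P` of `O` the
localisation of `X` is free of rank `n` over the localisation of `Λ`. -/
def IsLocallyFree (O : Type u) [CommRing O] {A : Type w} [Ring A] [Module O A]
    {V : Type w} [AddCommGroup V] [Module A V] [Module O V]
    (Λ : Submodule O A) (n : ℕ) (X : Submodule O V) : Prop :=
  ∀ P : Ideal O, P.IsMaximal →
    ∃ v : Fin n → V,
      Function.Injective (fun f : Fin n → A => ∑ i, f i • v i) ∧
      locAt O P X = freeImage (locAt O P Λ) v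

/-- The minimal `Γ`-lattice `Γ X` containing `X`, for `Γ` a subset of `A` and `X ⊆ V`. -/
def latSpan (O : Type u) [CommRing O] {A : Type w} [Ring A]
    {V : Type w} [AddCommGroup V] [Module A V] [Module O V]
    (Γ : Set A) (X : Submodule O V) : Submodule O V :=
  Submodule.span O (Set.image2 (fun a x => a • x) Γ (X : Set V))

/-- The maximal `Γ`-stable `O`-submodule `^Γ X` contained in `X`. -/
def latCore (O : Type u) [CommRing O] {A : Type w} [Ring A]
    {V : Type w} [AddCommGroup V] [Module A V] [Module O V]
    (Γ : Set A) (X : Submodule O V) : Submodule O V :=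
  sSup {Y : Submodule O V | IsStable Γ (Y : Set V) ∧ Y ≤ X}

/-- Every locally free lattice over the order `M` (in any `A`-module) is free. -/
def LocFreeImpliesFree (O : Type u) [CommRing O] (K : Type v) [Field K] [Algebra O K]
    (A : Type w) [Ring A] [Algebra K A] [Algebra O A] [IsScalarTower O K A]
    (M : Subalgebra O A) : Prop :=
  ∀ (V : Type w) [AddCommGroup V] [Module K V] [Module A V] [IsScalarTower K A V]
    [Module O V] [IsScalarTower O K V] (n : ℕ) (X : Submodule O V),
    X.FG → Submodule.span K (X : Set V) = ⊤ →
    IsLocallyFree O (Subalgebra.toSubmodule M) n X →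
    IsFreeLattice O (M : Set A) n X


/-- The dual lattice `X^∨ = Hom_O(X, O)` of a full `O`-lattice `X ⊆ V`, realised inside the
dual space `Hom_K(V, K)` as the functionals taking `O`-values on `X`. -/
def dualLat (O : Type u) [CommRing O] (K : Type v) [Field K] [Algebra O K]
    {V : Type w} [AddCommGroup V] [Module K V] [Module O V] [IsScalarTower O K V]
    (X : Submodule O V) : Submodule O (Module.Dual K V) where
  carrier := {f | ∀ x ∈ X, f x ∈ (1 : Submodule O K)}
  add_mem' := by
    intro f g hf hg x hx
    simpa using add_mem (hf x hx) (hg x hx)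
  zero_mem' := by
    intro x hx
    simpa using zero_mem (1 : Submodule O K)
  smul_mem' := by
    intro c f hf x hx
    simpa using Submodule.smul_mem (1 : Submodule O K) c (hf x hx)

/-- The maximal `O`-submodule of `D` (inside the dual of a left `A`-module `V`) stable under
the right `Γ`-action `(f·a)(x) = f(a•x)`: this is `D^Γ` for `D` a right `Λ`-lattice. -/
def rightDualCore (O : Type u) [CommRing O] (K : Type v) [Field K] [Algebra O K]
    {A : Type w} [Ring A] [Algebra K A]
    {V : Type w} [AddCommGroup V] [Module K V] [Module A V] [SMulCommClass A K V]
    [Module O V] [IsScalarTower O K V]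
    (Γ : Set A) (D : Submodule O (Module.Dual K V)) : Submodule O (Module.Dual K V) :=
  sSup {Y : Submodule O (Module.Dual K V) |
    (∀ a ∈ Γ, ∀ f ∈ Y, f ∘ₗ DistribMulAction.toLinearMap K V a ∈ Y) ∧ Y ≤ D}

/-! The equality of lattices is formal: `f` is integral on `ΓX`, the `O`-span of `Γ • X`, iff
every `f ∘ a` with `a ∈ Γ` is integral on `X`, i.e. iff `f` lies in the largest `Γ`-stable
submodule of `X^∨`. For the indices, if `e` carries `(ΓX)_P` onto `X_P` then its transpose carries
`(X^∨)_P` onto `((ΓX)^∨)_P` and has the same determinant, so `[ΓX : X]` is also an index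
`[X^∨ : (ΓX)^∨]`. Such an index is unique: two automorphisms carrying a full lattice `M_P` onto the
same `N_P` differ by one preserving `M_P`, which is free over the principal ideal domain `O_P`, so
that automorphism and its inverse have determinants in `O_P`. Right lattices are left lattices
over `Aᵐᵒᵖ`. -/

open Submodule

section LocAt

variable {O : Type*} [CommRing O] {V : Type*} [AddCommGroup V] [Module O V]
  {P : Ideal O} {N : Submodule O V}

theorem subset_locAt (hP : P ≠ ⊤) : (N : Set V) ⊆ locAt O P N := fun x hx =>
  ⟨1, (Ideal.ne_top_iff_one P).mp hP, by rwa [one_smul]⟩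

theorem exists_smul_mem_of_forall_mem_locAt [P.IsPrime] {ι : Type*} (T : Finset ι) {x : ι → V}
    (hx : ∀ i ∈ T, x i ∈ locAt O P N) : ∃ s ∉ P, ∀ i ∈ T, s • x i ∈ N := by
  classical
  induction T using Finset.induction_on with
  | empty => exact ⟨1, P.one_notMem, by simp⟩
  | insert j T _ ih =>
    obtain ⟨s, hs, hsT⟩ := ih fun i hi => hx i (Finset.mem_insert_of_mem hi)
    obtain ⟨t, ht, htj⟩ := hx j (Finset.mem_insert_self j T)
    refine ⟨t * s, fun h => (Ideal.IsPrime.mem_or_mem ‹_› h).elim ht hs, ?_⟩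
    rintro i hi
    rcases Finset.mem_insert.mp hi with rfl | hi
    · rw [mul_comm, mul_smul]; exact N.smul_mem s htj
    · rw [mul_smul]; exact N.smul_mem t (hsT i hi)

theorem Submodule.eq_of_forall_locAt_eq {M : Submodule O V}
    (h : ∀ P : Ideal O, P.IsMaximal → locAt O P M = locAt O P N) : M = N := by
  suffices key : ∀ {M N : Submodule O V},
      (∀ P : Ideal O, P.IsMaximal → locAt O P M = locAt O P N) → M ≤ N from
    le_antisymm (key h) (key fun P hP => (h P hP).symm)
  intro M N h x hx
  by_contra hxN
  have hcolon : N.colon {x} ≠ ⊤ := fun htop => hxN <| by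
    simpa using mem_colon_singleton.mp (htop ▸ Submodule.mem_top : (1 : O) ∈ N.colon {x})
  obtain ⟨Q, hQ, hle⟩ := Ideal.exists_le_maximal _ hcolon
  obtain ⟨s, hs, hsx⟩ := h Q hQ ▸ subset_locAt hQ.ne_top hx
  exact hs (hle (mem_colon_singleton.mpr hsx))

end LocAt

section LocalizationSubalgebra

variable (O : Type*) [CommRing O] [IsDomain O] (K : Type*) [Field K] [Algebra O K]
  [IsFractionRing O K] (P : Ideal O) [P.IsPrime]

noncomputable abbrev locSubalgebra : Subalgebra O K :=
  Localization.subalgebra.ofField K P.primeCompl P.primeCompl_le_nonZeroDivisors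

variable {O K P}

theorem mem_locSubalgebra_iff {z : K} :
    z ∈ locSubalgebra O K P ↔ z ∈ locAt O P (1 : Submodule O K) := by
  have hne : ∀ s ∉ P, algebraMap O K s ≠ 0 := fun s hs =>
    IsFractionRing.to_map_ne_zero_of_mem_nonZeroDivisors (P.primeCompl_le_nonZeroDivisors hs)
  constructor
  · rintro ⟨a, s, hs, rfl⟩
    refine ⟨s, hs, mem_one.mpr ⟨a, ?_⟩⟩
    rw [Algebra.smul_def, mul_left_comm, mul_inv_cancel₀ (hne s hs), mul_one]
  · rintro ⟨s, hs, hsz⟩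
    obtain ⟨a, ha⟩ := mem_one.mp hsz
    refine ⟨a, s, hs, ?_⟩
    rw [ha, Algebra.smul_def, mul_comm, inv_mul_cancel_left₀ (hne s hs)]

variable {W : Type*} [AddCommGroup W] [Module K W] [Module O W] [IsScalarTower O K W]

theorem coe_span_locSubalgebra (L : Submodule O W) :
    (span (locSubalgebra O K P) (L : Set W) : Set W) = locAt O P L := by
  ext x
  constructor
  · intro hx
    obtain ⟨n, r, y, rfl⟩ := mem_span_set'.mp hx
    obtain ⟨s, hs, hsr⟩ := exists_smul_mem_of_forall_mem_locAt (x := fun i => (r i : K))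
      Finset.univ fun i _ => mem_locSubalgebra_iff.mp (r i).2
    refine ⟨s, hs, ?_⟩
    rw [Finset.smul_sum]
    refine sum_mem fun i _ => ?_
    obtain ⟨a, ha⟩ := mem_one.mp (hsr i (Finset.mem_univ i))
    have : s • (r i • (y i : W)) = a • (y i : W) := by
      rw [← algebraMap_smul K a, ha, smul_assoc]; rfl
    rw [this]
    exact L.smul_mem a (y i).2
  · rintro ⟨s, hs, hsx⟩
    have hs0 : algebraMap O K s ≠ 0 :=
      IsFractionRing.to_map_ne_zero_of_mem_nonZeroDivisors (P.primeCompl_le_nonZeroDivisors hs)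
    have hinv : (algebraMap O K s)⁻¹ ∈ locSubalgebra O K P := ⟨1, s, hs, by simp⟩
    have : x = (⟨_, hinv⟩ : locSubalgebra O K P) • (s • x) := by
      change x = (algebraMap O K s)⁻¹ • (s • x)
      rw [← algebraMap_smul K s x, smul_smul, inv_mul_cancel₀ hs0, one_smul]
    rw [SetLike.mem_coe, this]
    exact smul_mem _ _ (subset_span hsx)

theorem locAt_span_singleton (d : K) :
    locAt O P (span O {d}) = span (locSubalgebra O K P) {d} := by
  rw [← coe_span_locSubalgebra (K := K), span_span_of_tower O (locSubalgebra O K P)]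

end LocalizationSubalgebra

instance {O : Type*} [CommRing O] [IsDedekindDomain O] {K : Type*} [Field K] [Algebra O K]
    [IsFractionRing O K] {P : Ideal O} [P.IsPrime] : IsPrincipalIdealRing (locSubalgebra O K P) :=
  have := IsLocalization.AtPrime.isDedekindDomain O P (locSubalgebra O K P)
  have := IsLocalization.AtPrime.isLocalRing (locSubalgebra O K P) P
  .of_finite_maximals <| (Set.finite_singleton (IsLocalRing.maximalIdeal _)).subset
    fun _ hI => IsLocalRing.eq_maximalIdeal hI

section Determinant

variable {R K W : Type*} [CommRing R] [IsDomain R] [Field K] [Algebra R K] [IsFractionRing R K]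
  [AddCommGroup W] [Module K W] [Module R W] [IsScalarTower R K W]

theorem LinearMap.det_mem_range_of_mapsTo [IsPrincipalIdealRing R] {N : Submodule R W}
    (hN : N.FG) (hspan : span K (N : Set W) = ⊤) {g : W →ₗ[K] W} (hg : Set.MapsTo g N N) :
    LinearMap.det g ∈ (algebraMap R K).range := by
  classical
  have := Module.Finite.iff_fg.mpr hN
  have := Module.IsTorsionFree.trans_faithfulSMul R K W
  let b := Module.Free.chooseBasis R N
  let w := fun i => (b i : W)
  have hli : LinearIndependent K w :=
    (LinearIndependent.iff_fractionRing R K).mp (b.linearIndependent.map' N.subtype N.ker_subtype)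
  have hNw : ∀ x ∈ N, x ∈ span R (Set.range w) := fun x hx => by
    have := mem_map_of_mem (f := N.subtype) (b.mem_span ⟨x, hx⟩)
    rwa [map_span, ← Set.range_comp] at this
  have hw : ⊤ ≤ span K (Set.range w) :=
    hspan ▸ span_le.mpr fun x hx => span_le_restrictScalars R K _ (hNw x hx)
  let v := Module.Basis.mk hli hw
  have hrepr : ∀ (y : N) i, v.repr y i = algebraMap R K (b.repr y i) := by
    intro y i
    have hy : (y : W) = ∑ k, algebraMap R K (b.repr y k) • v k := calc
      (y : W) = ↑(∑ k, b.repr y k • b k) := by rw [b.sum_repr]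
      _ = _ := by push_cast; simp only [v, w, Module.Basis.mk_apply, algebraMap_smul]
    rw [hy, v.repr_sum_self]
  let g' : N →ₗ[R] N := (g.restrictScalars R).restrict hg
  have hmat : LinearMap.toMatrix v v g = (LinearMap.toMatrix b b g').map (algebraMap R K) := by
    ext i j
    rw [LinearMap.toMatrix_apply, Matrix.map_apply, LinearMap.toMatrix_apply, ← hrepr,
      Module.Basis.mk_apply]
    rfl
  refine ⟨(LinearMap.toMatrix b b g').det, ?_⟩
  rw [RingHom.map_det, ← LinearMap.det_toMatrix v, hmat]
  rfl

end Determinant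

section DualLattice

variable {O K V : Type*} [CommRing O] [Field K] [Algebra O K] [AddCommGroup V] [Module K V]
  [Module O V] [IsScalarTower O K V] {X : Submodule O V}

theorem finiteDimensional_of_fg_of_span_eq_top (hX : X.FG)
    (hXspan : span K (X : Set V) = ⊤) : FiniteDimensional K V := by
  obtain ⟨T, rfl⟩ := hX
  exact .of_fg_top ⟨T, by rwa [span_span_of_tower] at hXspan⟩

theorem mem_dualLat_span_iff {T : Set V} {f : Module.Dual K V} :
    f ∈ dualLat O K (span O T) ↔ ∀ x ∈ T, f x ∈ (1 : Submodule O K) :=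
  span_le (p := (1 : Submodule O K).comap (f.restrictScalars O))

theorem dualLat_fg [IsNoetherianRing O] (hX : X.FG) (hXspan : span K (X : Set V) = ⊤) :
    (dualLat O K X).FG := by
  obtain ⟨T, rfl⟩ := hX
  let Φ : Module.Dual K V →ₗ[O] (T → K) :=
    { toFun f t := f t
      map_add' _ _ := rfl
      map_smul' _ _ := rfl }
  have hΦ : Function.Injective Φ := fun f g hfg =>
    LinearMap.ext_on (by rwa [span_span_of_tower] at hXspan) fun x hx => congrFun hfg ⟨x, hx⟩
  have hpi : (pi Set.univ fun _ : T => (1 : Submodule O K)).FG :=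
    fg_pi fun _ => ⟨{1}, by rw [Finset.coe_singleton, one_eq_span]⟩
  refine fg_of_fg_map_injective Φ hΦ (hpi.of_le ?_)
  rintro _ ⟨f, hf, rfl⟩
  exact mem_pi.mpr fun t _ => mem_dualLat_span_iff.mp hf t t.2

theorem span_dualLat_eq_top [IsDomain O] [IsFractionRing O K] (hX : X.FG) :
    span K (dualLat O K X : Set (Module.Dual K V)) = ⊤ := by
  obtain ⟨T, rfl⟩ := hX
  refine eq_top_iff.mpr fun f _ => ?_
  obtain ⟨d, hd⟩ := IsLocalization.exist_integer_multiples (nonZeroDivisors O) T fun t => f t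
  have hdf : (d : O) • f ∈ dualLat O K (span O T) := mem_dualLat_span_iff.mpr fun t ht =>
    mem_one.mpr (hd t ht)
  have hd0 : algebraMap O K d ≠ 0 := IsFractionRing.to_map_ne_zero_of_mem_nonZeroDivisors d.2
  have hf : f = (algebraMap O K d)⁻¹ • (d : O) • f := by
    rw [← algebraMap_smul K (d : O) f, smul_smul, inv_mul_cancel₀ hd0, one_smul]
  rw [hf]
  exact smul_mem _ _ (subset_span hdf)

theorem mem_locAt_dualLat_iff {P : Ideal O} [P.IsPrime] (hX : X.FG) {f : Module.Dual K V} :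
    f ∈ locAt O P (dualLat O K X) ↔
      ∀ x ∈ locAt O P X, f x ∈ locAt O P (1 : Submodule O K) := by
  constructor
  · rintro ⟨s, hs, hsf⟩ x ⟨t, ht, htx⟩
    refine ⟨s * t, fun h => (Ideal.IsPrime.mem_or_mem ‹_› h).elim hs ht, ?_⟩
    rw [mul_smul, ← LinearMap.map_smul_of_tower]
    exact hsf _ htx
  · obtain ⟨T, rfl⟩ := hX
    intro hf
    obtain ⟨s, hs, hsf⟩ := exists_smul_mem_of_forall_mem_locAt T fun t ht =>
      hf t (subset_locAt (Ideal.IsPrime.ne_top ‹_›) (subset_span ht))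
    exact ⟨s, hs, mem_dualLat_span_iff.mpr hsf⟩

theorem IsIdx.dual [FiniteDimensional K V] {M N : Submodule O V} (hM : M.FG) (hN : N.FG)
    {I : Submodule O K} (h : IsIdx O K M N I) : IsIdx O K (dualLat O K N) (dualLat O K M) I := by
  intro P hP
  obtain ⟨e, he, hdet⟩ := h P hP
  refine ⟨e.dualMap, ?_, by rw [hdet, ← LinearMap.det_dualMap]; rfl⟩
  suffices locAt O P (dualLat O K N) = e.dualMap ⁻¹' locAt O P (dualLat O K M) by
    rw [this, Set.image_preimage_eq _ e.dualMap.surjective]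
  ext f
  rw [Set.mem_preimage, mem_locAt_dualLat_iff hM, mem_locAt_dualLat_iff hN, ← he,
    Set.forall_mem_image]
  rfl

end DualLattice

section Index

variable {O K V : Type*} [CommRing O] [IsDedekindDomain O] [Field K] [Algebra O K]
  [IsFractionRing O K] [AddCommGroup V] [Module K V] [Module O V] [IsScalarTower O K V]
  {P : Ideal O} [P.IsPrime] {M : Submodule O V}

theorem det_mem_locSubalgebra_of_mapsTo (hM : M.FG) (hMspan : span K (M : Set V) = ⊤)
    {g : V →ₗ[K] V} (hg : Set.MapsTo g (locAt O P M) (locAt O P M)) :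
    LinearMap.det g ∈ locSubalgebra O K P := by
  obtain ⟨T, rfl⟩ := hM
  rw [← coe_span_locSubalgebra (K := K)] at hg
  obtain ⟨r, hr⟩ := LinearMap.det_mem_range_of_mapsTo
    ⟨T, (span_span_of_tower O (locSubalgebra O K P) (T : Set V)).symm⟩
    (by rwa [span_span_of_tower (locSubalgebra O K P) K]) hg
  exact hr ▸ r.2

theorem det_mem_span_det (hM : M.FG) (hMspan : span K (M : Set V) = ⊤) {N : Submodule O V}
    {e e' : V ≃ₗ[K] V} (he : e '' locAt O P M = locAt O P N)
    (he' : e' '' locAt O P M = locAt O P N) :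
    LinearMap.det (e : V →ₗ[K] V) ∈
      span (locSubalgebra O K P) {LinearMap.det (e' : V →ₗ[K] V)} := by
  let φ := e.trans e'.symm
  have hφ : Set.MapsTo φ (locAt O P M) (locAt O P M) := fun x hx => by
    have hex : e x ∈ e' '' locAt O P M := by rw [he', ← he]; exact Set.mem_image_of_mem e hx
    obtain ⟨y, hy, hxy⟩ := hex
    simpa [φ, ← hxy] using hy
  have hcomp : (e : V →ₗ[K] V) = e' ∘ₗ (φ : V →ₗ[K] V) := by ext; simp [φ]
  refine mem_span_singleton.mpr ⟨⟨_, det_mem_locSubalgebra_of_mapsTo hM hMspan hφ⟩, ?_⟩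
  rw [hcomp, LinearMap.det_comp, mul_comm]
  rfl

theorem IsIdx.unique (hM : M.FG) (hMspan : span K (M : Set V) = ⊤) {N : Submodule O V}
    {I J : Submodule O K} (hI : IsIdx O K M N I) (hJ : IsIdx O K M N J) : I = J := by
  refine Submodule.eq_of_forall_locAt_eq fun P hP => ?_
  obtain ⟨e, he, hIe⟩ := hI P hP
  obtain ⟨e', he', hJe'⟩ := hJ P hP
  rw [hIe, hJe', locAt_span_singleton, locAt_span_singleton,
    le_antisymm ((span_singleton_le_iff_mem _ _).mpr (det_mem_span_det hM hMspan he he'))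
      ((span_singleton_le_iff_mem _ _).mpr (det_mem_span_det hM hMspan he' he))]

end Index

section LatticeSpan

variable {O : Type*} [CommRing O] {B V : Type w} [Ring B] [AddCommGroup V] [Module B V]
  [Module O V] {X : Submodule O V}

theorem le_latSpan {Γ : Set B} (h1 : (1 : B) ∈ Γ) (X : Submodule O V) : X ≤ latSpan O Γ X :=
  fun x hx => subset_span ⟨1, h1, x, hx, one_smul B x⟩

theorem smul_mem_latSpan [SMulCommClass B O V] (Γ : Submonoid B) {a : B} (ha : a ∈ Γ) {z : V}
    (hz : z ∈ latSpan O (Γ : Set B) X) : a • z ∈ latSpan O (Γ : Set B) X := by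
  induction hz using span_induction with
  | mem _ hz =>
    obtain ⟨b, hb, x, hx, rfl⟩ := hz
    rw [smul_smul]
    exact subset_span ⟨a * b, Γ.mul_mem ha hb, x, hx, rfl⟩
  | zero => rw [smul_zero]; exact zero_mem _
  | add _ _ _ _ hy hz => rw [smul_add]; exact add_mem hy hz
  | smul c _ _ hz => rw [smul_comm]; exact smul_mem _ c hz

theorem latSpan_fg [Algebra O B] [IsScalarTower O B V] {Γ : Submodule O B} (hΓ : Γ.FG)
    (hX : X.FG) : (latSpan O (Γ : Set B) X).FG := by
  have h := hΓ.map₂ (Algebra.lsmul O O V).toLinearMap hX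
  rwa [map₂_eq_span_image2] at h

variable {K : Type*} [Field K] [Algebra O K] [Algebra K B] [Module K V] [SMulCommClass B K V]
  [IsScalarTower O K V]

theorem dualLat_latSpan [SMulCommClass B O V] (Γ : Submonoid B) (X : Submodule O V) :
    dualLat O K (latSpan O (Γ : Set B) X) = rightDualCore O K (Γ : Set B) (dualLat O K X) := by
  refine le_antisymm (le_sSup ⟨fun a ha f hf z hz => hf _ (smul_mem_latSpan Γ ha hz),
    fun f hf x hx => hf x (le_latSpan Γ.one_mem X hx)⟩) (sSup_le ?_)
  rintro Y ⟨hY, hYX⟩ f hf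
  refine mem_dualLat_span_iff.mpr ?_
  rintro _ ⟨a, ha, x, hx, rfl⟩
  exact hYX (hY a ha f hf) x hx

theorem dualLat_latSpan_eq_and_index_eq [IsDedekindDomain O] [IsFractionRing O K] [Algebra O B]
    [IsScalarTower O B V] (Γ : Subalgebra O B) (hΓ : (Subalgebra.toSubmodule Γ).FG)
    (hX : X.FG) (hXspan : span K (X : Set V) = ⊤) :
    dualLat O K (latSpan O (Γ : Set B) X) = rightDualCore O K (Γ : Set B) (dualLat O K X) ∧
      ∀ I1 I2 : Submodule O K, IsIdx O K (latSpan O (Γ : Set B) X) X I1 →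
        IsIdx O K (dualLat O K X) (rightDualCore O K (Γ : Set B) (dualLat O K X)) I2 →
          I1 = I2 := by
  have hdual : dualLat O K (latSpan O (Γ : Set B) X) =
      rightDualCore O K (Γ : Set B) (dualLat O K X) := dualLat_latSpan Γ.toSubmonoid X
  have := finiteDimensional_of_fg_of_span_eq_top hX hXspan
  refine ⟨hdual, fun I1 I2 h1 h2 => ?_⟩
  rw [← hdual] at h2
  exact (h1.dual (latSpan_fg hΓ hX) hX).unique (dualLat_fg hX hXspan) (span_dualLat_eq_top hX) h2

end LatticeSpan

theorem dual_of_overorder_span_general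
    (O : Type u) [CommRing O] [IsDedekindDomain O]
    (K : Type v) [Field K] [Algebra O K] [IsFractionRing O K]
    (A : Type w) [Ring A] [Algebra K A] [Algebra O A] [IsScalarTower O K A]
    (Λ Γ : Subalgebra O A) (hΓ : IsOrder O K A Γ) :
    (∀ (V : Type w) [AddCommGroup V] [Module K V] [Module A V] [IsScalarTower K A V]
      [SMulCommClass A K V] [Module O V] [IsScalarTower O K V] (X : Submodule O V),
      X.FG → Submodule.span K (X : Set V) = ⊤ → IsStable (Λ : Set A) (X : Set V) →
      (dualLat O K (latSpan O (Γ : Set A) X)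
          = rightDualCore O K (Γ : Set A) (dualLat O K X) ∧
        ∀ I1 I2 : Submodule O K,
          IsIdx O K (latSpan O (Γ : Set A) X) X I1 →
          IsIdx O K (dualLat O K X) (rightDualCore O K (Γ : Set A) (dualLat O K X)) I2 →
          I1 = I2)) ∧
    (∀ (V : Type w) [AddCommGroup V] [Module K V] [Module Aᵐᵒᵖ V] [IsScalarTower K Aᵐᵒᵖ V]
      [SMulCommClass Aᵐᵒᵖ K V] [Module O V] [IsScalarTower O K V] (X : Submodule O V),
      X.FG → Submodule.span K (X : Set V) = ⊤ →
      IsStable (MulOpposite.op '' (Λ : Set A)) (X : Set V) →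
      (dualLat O K (latSpan O (MulOpposite.op '' (Γ : Set A)) X)
          = rightDualCore O K (MulOpposite.op '' (Γ : Set A)) (dualLat O K X) ∧
        ∀ I1 I2 : Submodule O K,
          IsIdx O K (latSpan O (MulOpposite.op '' (Γ : Set A)) X) X I1 →
          IsIdx O K (dualLat O K X)
            (rightDualCore O K (MulOpposite.op '' (Γ : Set A)) (dualLat O K X)) I2 →
          I1 = I2)) := by
  have := Module.Finite.iff_fg.mpr hΓ.1
  have hΓop : (Subalgebra.toSubmodule Γ.op).FG :=
    Module.Finite.iff_fg.mp (Module.Finite.equiv Γ.linearEquivOp)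
  have hop : MulOpposite.op '' (Γ : Set A) = Γ.op :=
    congrFun (Set.image_eq_preimage_of_inverse MulOpposite.unop_op MulOpposite.op_unop) _
  refine ⟨fun V _ _ _ _ _ _ _ X hX hXspan _ => ?_, fun V _ _ _ _ _ _ _ X hX hXspan _ => ?_⟩
  · have := IsScalarTower.to₁₃₄ O K A V
    exact dualLat_latSpan_eq_and_index_eq Γ hΓ.1 hX hXspan
  · have := IsScalarTower.to₁₃₄ O K Aᵐᵒᵖ V
    rw [hop]
    exact dualLat_latSpan_eq_and_index_eq Γ.op hΓop hX hXspan

/-- **Lemma.** Let `O` be a Dedekind domain with fraction field `K ≠ O` and `Λ ⊆ Γ`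
`O`-orders in a finite-dimensional `K`-algebra `A`.
(i) For a left `Λ`-lattice `X`: `(Γ X)^∨ = (X^∨)^Γ` and `[Γ X : X]_O = [X^∨ : (X^∨)^Γ]_O`.
(ii) For a right `Λ`-lattice `X` (a module over `Aᵐᵒᵖ`): `(X Γ)^∨ = ^Γ(X^∨)` and
`[X Γ : X]_O = [X^∨ : ^Γ(X^∨)]_O`. -/
theorem dual_of_overorder_span
    (O : Type u) [CommRing O] [IsDedekindDomain O] (hO : ¬IsField O)
    (K : Type v) [Field K] [Algebra O K] [IsFractionRing O K]
    (A : Type w) [Ring A] [Algebra K A] [Algebra O A] [IsScalarTower O K A]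
    [FiniteDimensional K A]
    (Λ Γ : Subalgebra O A) (hΛ : IsOrder O K A Λ) (hΓ : IsOrder O K A Γ) (hΛΓ : Λ ≤ Γ) :
    (∀ (V : Type w) [AddCommGroup V] [Module K V] [Module A V] [IsScalarTower K A V]
      [SMulCommClass A K V] [Module O V] [IsScalarTower O K V] (X : Submodule O V),
      X.FG → Submodule.span K (X : Set V) = ⊤ → IsStable (Λ : Set A) (X : Set V) →
      (dualLat O K (latSpan O (Γ : Set A) X)
          = rightDualCore O K (Γ : Set A) (dualLat O K X) ∧
        ∀ I1 I2 : Submodule O K,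
          IsIdx O K (latSpan O (Γ : Set A) X) X I1 →
          IsIdx O K (dualLat O K X) (rightDualCore O K (Γ : Set A) (dualLat O K X)) I2 →
          I1 = I2)) ∧
    (∀ (V : Type w) [AddCommGroup V] [Module K V] [Module Aᵐᵒᵖ V] [IsScalarTower K Aᵐᵒᵖ V]
      [SMulCommClass Aᵐᵒᵖ K V] [Module O V] [IsScalarTower O K V] (X : Submodule O V),
      X.FG → Submodule.span K (X : Set V) = ⊤ →
      IsStable (MulOpposite.op '' (Λ : Set A)) (X : Set V) →
      (dualLat O K (latSpan O (MulOpposite.op '' (Γ : Set A)) X)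
          = rightDualCore O K (MulOpposite.op '' (Γ : Set A)) (dualLat O K X) ∧
        ∀ I1 I2 : Submodule O K,
          IsIdx O K (latSpan O (MulOpposite.op '' (Γ : Set A)) X) X I1 →
          IsIdx O K (dualLat O K X)
            (rightDualCore O K (MulOpposite.op '' (Γ : Set A)) (dualLat O K X)) I2 →
          I1 = I2)) :=
  dual_of_overorder_span_general O K A Λ Γ hΓ
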